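/- Let H be a nonzero Hilbert space, E = K(H) ⊕ K(H) with inner product ⟨(T₁, S₁), (T₂, S₂)⟩ = T₁*T₂ + S₁*S₂, F = K(H) ⊕ 0, and φ = id : K(H) → B(H). Then the φ-map Φ : F → B(H), Φ((T, 0)) = T, has no extension to a φ-map on all of E; that is, there is no Φ' : E → B(H) with Φ'|_F = Φ and Φ'(x)*Φ'(y) = φ(⟨x, y⟩) for all x, y ∈ E. -/

import Mathlib

/-!
If `Φ'` were such an extension, pick a nonzero compact `S` and put `X = Φ'(0, S)`.
For every compact `T`, `T* X = Φ'(T, 0)* Φ'(0, S) = T* 0 + 0* S = 0`; testing this at `v` with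
the rank-one operator `u ↦ ⟪X v, u⟫ X v` gives `‖X v‖² X v = 0`, so `X = 0`. But then `S* S = X* X = 0`,
so `S = 0` by the C*-identity.
-/

open ContinuousLinearMap InnerProductSpace

section

variable {𝕜 : Type*} [RCLike 𝕜]

theorem isCompactOperator_rankOne {E F : Type*} [SeminormedAddCommGroup E] [NormedSpace 𝕜 E]
    [SeminormedAddCommGroup F] [InnerProductSpace 𝕜 F] (x : E) (y : F) :
    IsCompactOperator (rankOne 𝕜 x y) :=
  (isCompactOperator_of_locallyCompactSpace_dom (innerSL 𝕜 y)).clm_comp (toSpanSingleton 𝕜 x)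

variable {H : Type*} [NormedAddCommGroup H] [InnerProductSpace 𝕜 H]

theorem exists_isCompactOperator_ne_zero [Nontrivial H] :
    ∃ S : H →L[𝕜] H, IsCompactOperator S ∧ S ≠ 0 := by
  obtain ⟨v, hv⟩ := exists_ne (0 : H)
  exact ⟨rankOne 𝕜 v v, isCompactOperator_rankOne v v, rankOne_ne_zero hv hv⟩

theorem eq_zero_of_forall_isCompactOperator_star_mul_eq_zero [CompleteSpace H]
    {A : H →L[𝕜] H} (hA : ∀ T : H →L[𝕜] H, IsCompactOperator T → star T * A = 0) : A = 0 := by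
  ext u
  have hT := congr($(hA _ (isCompactOperator_rankOne (A u) (A u))) u)
  simpa [star_eq_adjoint, inner_self_eq_zero] using hT

end

/-- **A φ-map with no φ-map extension.**
For a nonzero Hilbert space `H`, let `E = K(H) ⊕ K(H)` with inner product
`⟪(T₁, S₁), (T₂, S₂)⟫ = T₁* T₂ + S₁* S₂`, `F = K(H) ⊕ 0`, and `φ = id : K(H) → B(H)`.
The `φ`-map `Φ : F → B(H)`, `Φ(T, 0) = T`, has no extension to a `φ`-map on all of
`E`: there is no `Φ' : E → B(H)` with `Φ'(T, 0) = T` for all compact `T` and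
`Φ'(x)* Φ'(y) = φ ⟪x, y⟫` for all `x, y ∈ E`. -/
theorem no_phiMap_extension_compact_example
    {H : Type*} [NormedAddCommGroup H] [InnerProductSpace ℂ H] [CompleteSpace H]
    [Nontrivial H] :
    ¬ ∃ Φ' : {T : H →L[ℂ] H // IsCompactOperator T} ×
             {T : H →L[ℂ] H // IsCompactOperator T} → (H →L[ℂ] H),
        (∀ T : {T : H →L[ℂ] H // IsCompactOperator T},
          Φ' (T, ⟨0, isCompactOperator_zero⟩) = T.val) ∧
        (∀ p q : {T : H →L[ℂ] H // IsCompactOperator T} ×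
             {T : H →L[ℂ] H // IsCompactOperator T},
          star (Φ' p) * Φ' q = star p.1.val * q.1.val + star p.2.val * q.2.val) := by
  rintro ⟨Φ', hΦ'F, hΦ'⟩
  obtain ⟨S, hS, hS0⟩ := exists_isCompactOperator_ne_zero (𝕜 := ℂ) (H := H)
  set X := Φ' (⟨0, isCompactOperator_zero⟩, ⟨S, hS⟩)
  have hX : X = 0 := eq_zero_of_forall_isCompactOperator_star_mul_eq_zero fun T hT => by
    simpa [hΦ'F] using hΦ' (⟨T, hT⟩, ⟨0, isCompactOperator_zero⟩)
      (⟨0, isCompactOperator_zero⟩, ⟨S, hS⟩)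
  have hSS : star S * S = 0 := by
    simpa [X, hX] using (hΦ' (⟨0, isCompactOperator_zero⟩, ⟨S, hS⟩)
      (⟨0, isCompactOperator_zero⟩, ⟨S, hS⟩)).symm
  exact hS0 (CStarRing.star_mul_self_eq_zero_iff S |>.mp hSS)
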